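/- Let d ≥ 1, κ ≥ 2d, and let α : ℝ^{2d} → ℂ be continuously differentiable with ‖α‖_{A^{κ,2}} < ∞ and ‖∇α‖_{A^{κ,2}} < ∞ (norms on ℝ^{2d}). Then the density ρ(x) := ∫_{ℝ^d} |α(x,v)|² dv is well-defined for every x, ρ ∈ L¹(ℝ^d) ∩ L^∞(ℝ^d), ρ is continuously differentiable with ∇ρ(x) = 2 Re ∫_{ℝ^d} conj(α)(x,v) ∇_x α(x,v) dv, and ∇ρ ∈ L¹(ℝ^d); in particular ρ ∈ W^{1,1}(ℝ^d) ∩ C¹(ℝ^d). -/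

import Mathlib

open MeasureTheory
open scoped ENNReal NNReal

/-- `ℝ^d` as a Euclidean space. -/
abbrev E (d : ℕ) : Type := EuclideanSpace ℝ (Fin d)

/-- The `A^{κ,p}` norm: `sup_{R ≥ 0} (1+R)^{-κ/p} (∫ sup_{|z̄| ≤ R} ‖f(z+z̄)‖^p dz)^{1/p}`. -/
noncomputable def Anorm {G F : Type*} [NormedAddCommGroup G] [MeasureSpace G]
    [NormedAddCommGroup F] (κ p : ℝ) (f : G → F) : ℝ≥0∞ :=
  ⨆ R : NNReal, (ENNReal.ofReal (1 + (R : ℝ))) ^ (-(κ / p)) *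
    (∫⁻ z, ⨆ w ∈ Metric.closedBall (0 : G) (R : ℝ),
      ENNReal.ofReal (‖f (z + w)‖ ^ p)) ^ (1 / p)

/-!
A finite `A^{κ,2}` norm already controls suprema of `|f(x, v)|²` over spatial balls: if
`|y - x₀| ≤ 1`, every `(x, v)` with `|x - x₀| ≤ r` is the translate `(y, v) + (x - y, 0)` by a
vector of length at most `r + 1`, so averaging over `y` gives, uniformly in `x₀`,
`∫ sup_{|x - x₀| ≤ r} |f(x, v)|² dv ≤ |B₁|⁻¹ ∫ sup_{|w| ≤ r + 1} |f(z + w)|² dz < ∞`.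
With `r = 0` this makes `ρ` finite and bounded; with `r = 1`, applied to `α` and `∇α`, it yields
integrable majorants of `|∂ₓ|α|²| ≤ |α|² + |∇α|²` on unit balls, so `ρ` may be differentiated
under the integral sign and `∇ρ` is continuous. The `L¹` bounds on `ρ` and `∇ρ` are Fubini.
-/

open Metric Filter Topology

section BallSup

variable {G : Type*} [NormedAddCommGroup G]

noncomputable def ballSup (g : G → ℝ≥0∞) (R : ℝ) (z : G) : ℝ≥0∞ :=
  ⨆ w ∈ closedBall (0 : G) R, g (z + w)

theorem le_ballSup (g : G → ℝ≥0∞) {R : ℝ} (hR : 0 ≤ R) (z : G) : g z ≤ ballSup g R z := by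
  have h := le_iSup₂ (f := fun w (_ : w ∈ closedBall (0 : G) R) => g (z + w)) 0
    (mem_closedBall_self hR)
  rwa [add_zero] at h

theorem LowerSemicontinuous.ballSup {g : G → ℝ≥0∞} (hg : LowerSemicontinuous g) (R : ℝ) :
    LowerSemicontinuous (ballSup g R) :=
  lowerSemicontinuous_biSup fun w _ => hg.comp (continuous_add_const w)

theorem lintegral_ballSup_lt_top_of_Anorm_lt_top [MeasureSpace G] {F : Type*}
    [NormedAddCommGroup F] {κ p : ℝ} (hp : 0 < p) {f : G → F} (hA : Anorm κ p f < ⊤)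
    {R : ℝ} (hR : 0 ≤ R) :
    ∫⁻ z, ballSup (fun z => ENNReal.ofReal (‖f z‖ ^ p)) R z < ⊤ := by
  lift R to ℝ≥0 using hR
  have hterm := (le_iSup (fun R : ℝ≥0 => (ENNReal.ofReal (1 + (R : ℝ))) ^ (-(κ / p)) *
    (∫⁻ z, ballSup (fun z => ENNReal.ofReal (‖f z‖ ^ p)) R z) ^ (1 / p)) R).trans_lt hA
  have hweight : ENNReal.ofReal (1 + (R : ℝ)) ^ (-(κ / p)) ≠ 0 :=
    (ENNReal.rpow_pos (ENNReal.ofReal_pos.2 (by positivity)) ENNReal.ofReal_ne_top).ne'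
  rcases ENNReal.mul_lt_top_iff.1 hterm with ⟨-, h⟩ | h | h
  · exact (ENNReal.rpow_lt_top_iff_of_pos (by positivity)).1 h
  · exact absurd h hweight
  · rw [ENNReal.rpow_eq_zero_iff] at h
    rcases h with ⟨h, -⟩ | ⟨-, h⟩
    · simp [h]
    · exact (lt_asymm h (one_div_pos.2 hp)).elim

theorem integrable_norm_sq_of_Anorm_lt_top [MeasureSpace G] {F : Type*} [NormedAddCommGroup F]
    {κ : ℝ} {f : G → F} (hf : AEStronglyMeasurable f) (hA : Anorm κ 2 f < ⊤) :
    Integrable fun z => ‖f z‖ ^ 2 := by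
  refine ⟨hf.norm.pow 2, ?_⟩
  rw [hasFiniteIntegral_iff_ofReal (Eventually.of_forall fun z => by positivity)]
  refine (lintegral_mono fun z =>
    le_ballSup (fun z => ENNReal.ofReal (‖f z‖ ^ 2)) le_rfl z).trans_lt ?_
  simpa only [Real.rpow_two] using lintegral_ballSup_lt_top_of_Anorm_lt_top two_pos hA le_rfl

end BallSup

section SliceSup

variable {X Y : Type*} [NormedAddCommGroup X] [NormedAddCommGroup Y]

theorem LowerSemicontinuous.biSup_fst {g : X × Y → ℝ≥0∞} (hg : LowerSemicontinuous g)
    (s : Set X) : LowerSemicontinuous fun v => ⨆ x ∈ s, g (x, v) :=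
  lowerSemicontinuous_biSup fun x _ => hg.comp (Continuous.prodMk_right x)

variable [MeasurableSpace X] [MeasurableSpace Y] [OpensMeasurableSpace X] [OpensMeasurableSpace Y]
  [SecondCountableTopology X]

theorem measure_closedBall_mul_lintegral_biSup_le {μ : Measure X} {ν : Measure Y} [SFinite μ]
    [SFinite ν] {g : X × Y → ℝ≥0∞} (hg : LowerSemicontinuous g) (x₀ : X) (r : ℝ) :
    μ (closedBall x₀ 1) * ∫⁻ v, ⨆ x ∈ closedBall x₀ r, g (x, v) ∂ν ≤
      ∫⁻ z, ballSup g (r + 1) z ∂(μ.prod ν) := by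
  set S : Y → ℝ≥0∞ := fun v => ⨆ x ∈ closedBall x₀ r, g (x, v)
  set M := ballSup g (r + 1)
  have hS : Measurable S := (hg.biSup_fst _).measurable
  have hM : Measurable M := (hg.ballSup _).measurable
  have hSM : ∀ y ∈ closedBall x₀ 1, ∀ v, S v ≤ M (y, v) := by
    intro y hy v
    refine iSup₂_le fun x hx => ?_
    have hxy : ((x - y, 0) : X × Y) ∈ closedBall 0 (r + 1) := by
      rw [mem_closedBall_zero_iff, Prod.norm_mk, norm_zero, ← dist_eq_norm]
      exact max_le ((dist_triangle_right x y x₀).trans (add_le_add hx hy))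
        (by linarith [dist_nonneg.trans hx])
    calc g (x, v) = g ((y, v) + (x - y, 0)) := by simp
      _ ≤ M (y, v) := le_iSup₂ (f := fun w (_ : w ∈ closedBall (0 : X × Y) (r + 1)) =>
          g ((y, v) + w)) _ hxy
  calc μ (closedBall x₀ 1) * ∫⁻ v, S v ∂ν
      = ∫⁻ v, ∫⁻ _ in closedBall x₀ 1, S v ∂μ ∂ν := by
        simp_rw [setLIntegral_const, mul_comm _ (μ _)]
        exact (lintegral_const_mul _ hS).symm
    _ ≤ ∫⁻ v, ∫⁻ y in closedBall x₀ 1, M (y, v) ∂μ ∂ν :=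
        lintegral_mono fun v => setLIntegral_mono' measurableSet_closedBall fun y hy => hSM y hy v
    _ ≤ ∫⁻ v, ∫⁻ y, M (y, v) ∂μ ∂ν := lintegral_mono fun v => setLIntegral_le_lintegral _ _
    _ = ∫⁻ z, M z ∂(μ.prod ν) := by
        rw [lintegral_prod _ hM.aemeasurable,
          lintegral_lintegral_swap (f := fun y v => M (y, v)) hM.aemeasurable]

end SliceSup

section AnormSlices

variable {X Y F : Type*} [NormedAddCommGroup X] [NormedSpace ℝ X] [FiniteDimensional ℝ X]
  [MeasureSpace X] [BorelSpace X] [(volume : Measure X).IsAddHaarMeasure]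
  [NormedAddCommGroup Y] [MeasureSpace Y] [OpensMeasurableSpace Y] [SFinite (volume : Measure Y)]
  [NormedAddCommGroup F] {f : X × Y → F} {κ : ℝ}

theorem exists_lintegral_biSup_closedBall_le (hf : Continuous f) (hA : Anorm κ 2 f < ⊤) {r : ℝ}
    (hr : 0 ≤ r) :
    ∃ C < ⊤, ∀ x₀ : X, ∫⁻ v, ⨆ x ∈ closedBall x₀ r, ENNReal.ofReal (‖f (x, v)‖ ^ 2) ≤ C := by
  have hg : LowerSemicontinuous fun z => ENNReal.ofReal (‖f z‖ ^ 2) :=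
    (ENNReal.continuous_ofReal.comp (hf.norm.pow 2)).lowerSemicontinuous
  have hI : ∫⁻ z, ballSup (fun z => ENNReal.ofReal (‖f z‖ ^ 2)) (r + 1) z < ⊤ := by
    simpa only [Real.rpow_two] using
      lintegral_ballSup_lt_top_of_Anorm_lt_top two_pos hA (by linarith)
  have hB : volume (closedBall (0 : X) 1) ≠ 0 := (measure_closedBall_pos _ _ one_pos).ne'
  refine ⟨(∫⁻ z, ballSup (fun z => ENNReal.ofReal (‖f z‖ ^ 2)) (r + 1) z) /
    volume (closedBall (0 : X) 1), ENNReal.div_lt_top hI.ne hB, fun x₀ => ?_⟩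
  rw [ENNReal.le_div_iff_mul_le (Or.inl hB) (Or.inl measure_closedBall_lt_top.ne), mul_comm,
    ← Measure.addHaar_closedBall_center volume x₀]
  exact measure_closedBall_mul_lintegral_biSup_le hg x₀ r

theorem exists_lintegral_norm_sq_slice_le (hf : Continuous f) (hA : Anorm κ 2 f < ⊤) :
    ∃ C < ⊤, ∀ x : X, ∫⁻ v, ENNReal.ofReal (‖f (x, v)‖ ^ 2) ≤ C := by
  obtain ⟨C, hC, hle⟩ := exists_lintegral_biSup_closedBall_le hf hA le_rfl
  exact ⟨C, hC, fun x => (lintegral_mono fun v =>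
    le_biSup (fun x => ENNReal.ofReal (‖f (x, v)‖ ^ 2)) (mem_closedBall_self le_rfl)).trans (hle x)⟩

theorem integrable_norm_sq_slice (hf : Continuous f) (hA : Anorm κ 2 f < ⊤) (x : X) :
    Integrable fun v => ‖f (x, v)‖ ^ 2 := by
  obtain ⟨C, hC, hle⟩ := exists_lintegral_norm_sq_slice_le hf hA
  refine ⟨((hf.comp (Continuous.prodMk_right x)).norm.pow 2).aestronglyMeasurable, ?_⟩
  rw [hasFiniteIntegral_iff_ofReal (Eventually.of_forall fun v => by positivity)]
  exact (hle x).trans_lt hC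

theorem memLp_top_integral_norm_sq_slice (hf : Continuous f) (hA : Anorm κ 2 f < ⊤) :
    MemLp (fun x => ∫ v, ‖f (x, v)‖ ^ 2) ⊤ := by
  obtain ⟨C, hC, hle⟩ := exists_lintegral_norm_sq_slice_le hf hA
  refine memLp_top_of_bound
    (hf.norm.pow 2).stronglyMeasurable.integral_prod_right'.aestronglyMeasurable
    C.toReal (Eventually.of_forall fun x => ?_)
  have hnonneg : 0 ≤ᵐ[volume] fun v => ‖f (x, v)‖ ^ 2 := Eventually.of_forall fun v => by positivity
  rw [Real.norm_of_nonneg (integral_nonneg_of_ae hnonneg),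
    integral_eq_lintegral_of_nonneg_ae hnonneg (integrable_norm_sq_slice hf hA x).1]
  exact ENNReal.toReal_mono hC.ne (hle x)

theorem exists_integrable_bound_norm_sq_slice (hf : Continuous f) (hA : Anorm κ 2 f < ⊤) (x₀ : X)
    {r : ℝ} (hr : 0 ≤ r) :
    ∃ b : Y → ℝ, Integrable b ∧ ∀ᵐ v, ∀ x ∈ closedBall x₀ r, ‖f (x, v)‖ ^ 2 ≤ b v := by
  obtain ⟨C, hC, hle⟩ := exists_lintegral_biSup_closedBall_le hf hA hr
  set S : Y → ℝ≥0∞ := fun v => ⨆ x ∈ closedBall x₀ r, ENNReal.ofReal (‖f (x, v)‖ ^ 2)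
  have hS : Measurable S :=
    ((ENNReal.continuous_ofReal.comp (hf.norm.pow 2)).lowerSemicontinuous.biSup_fst _).measurable
  have hSC : ∫⁻ v, S v ≠ ⊤ := ((hle x₀).trans_lt hC).ne
  refine ⟨fun v => (S v).toReal, integrable_toReal_of_lintegral_ne_top hS.aemeasurable hSC, ?_⟩
  filter_upwards [ae_lt_top hS hSC] with v hv x hx
  exact (ENNReal.ofReal_le_iff_le_toReal hv.ne).1
    (le_biSup (fun x => ENNReal.ofReal (‖f (x, v)‖ ^ 2)) hx)

end AnormSlices

section Differentiation

variable {X Y H : Type*} [NormedAddCommGroup X] [NormedSpace ℝ X] [NormedAddCommGroup Y]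
  [NormedSpace ℝ Y] [NormedAddCommGroup H] [InnerProductSpace ℝ H] {φ : X × Y → H}

noncomputable def normSqFDerivFst (φ : X × Y → H) (z : X × Y) : X →L[ℝ] ℝ :=
  2 • (innerSL ℝ (φ z)).comp ((fderiv ℝ φ z).comp (ContinuousLinearMap.inl ℝ X Y))

theorem hasFDerivAt_comp_prodMk_left {x : X} {v : Y} (hφ : DifferentiableAt ℝ φ (x, v)) :
    HasFDerivAt (fun y => φ (y, v)) ((fderiv ℝ φ (x, v)).comp (ContinuousLinearMap.inl ℝ X Y)) x :=
  hφ.hasFDerivAt.comp x (hasFDerivAt_prodMk_left x v)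

theorem hasFDerivAt_norm_sq_comp_prodMk_left {x : X} {v : Y} (hφ : DifferentiableAt ℝ φ (x, v)) :
    HasFDerivAt (fun y => ‖φ (y, v)‖ ^ 2) (normSqFDerivFst φ (x, v)) x :=
  (hasFDerivAt_comp_prodMk_left hφ).norm_sq

theorem continuous_normSqFDerivFst (hφ : ContDiff ℝ 1 φ) : Continuous (normSqFDerivFst φ) :=
  (((innerSL ℝ).continuous.comp hφ.continuous).clm_comp
    ((hφ.continuous_fderiv one_ne_zero).clm_comp continuous_const)).const_smul 2

theorem norm_normSqFDerivFst_le (z : X × Y) :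
    ‖normSqFDerivFst φ z‖ ≤ ‖φ z‖ ^ 2 + ‖fderiv ℝ φ z‖ ^ 2 := by
  have hcomp : ‖(innerSL ℝ (φ z)).comp ((fderiv ℝ φ z).comp (ContinuousLinearMap.inl ℝ X Y))‖ ≤
      ‖φ z‖ * ‖fderiv ℝ φ z‖ := by
    refine (ContinuousLinearMap.opNorm_comp_le _ _).trans ?_
    rw [innerSL_apply_norm]
    gcongr
    exact (ContinuousLinearMap.opNorm_comp_le _ _).trans
      (mul_le_of_le_one_right (norm_nonneg _) (ContinuousLinearMap.norm_inl_le_one _ _ _))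
  calc ‖normSqFDerivFst φ z‖ ≤ 2 * ‖φ z‖ * ‖fderiv ℝ φ z‖ := by
        rw [mul_assoc]
        exact norm_nsmul_le.trans (by push_cast; gcongr)
    _ ≤ _ := two_mul_le_add_sq _ _

variable [SecondCountableTopology Y] [MeasurableSpace Y] [OpensMeasurableSpace Y] {ν : Measure Y}
  {x₀ : X} {s : Set X} {b : Y → ℝ}

theorem hasFDerivAt_integral_norm_sq_comp_prodMk_left (hφ : ContDiff ℝ 1 φ) (hs : s ∈ 𝓝 x₀)
    (hb : Integrable b ν)
    (hφb : ∀ᵐ v ∂ν, ∀ x ∈ s, ‖φ (x, v)‖ ^ 2 + ‖fderiv ℝ φ (x, v)‖ ^ 2 ≤ b v) :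
    HasFDerivAt (fun x => ∫ v, ‖φ (x, v)‖ ^ 2 ∂ν) (∫ v, normSqFDerivFst φ (x₀, v) ∂ν) x₀ := by
  have hmeas (x : X) : AEStronglyMeasurable (fun v => ‖φ (x, v)‖ ^ 2) ν :=
    ((hφ.continuous.comp (Continuous.prodMk_right x)).norm.pow 2).aestronglyMeasurable
  have hint : Integrable (fun v => ‖φ (x₀, v)‖ ^ 2) ν :=
    hb.mono' (hmeas x₀) <| hφb.mono fun v hv => by
      simpa using (le_add_of_nonneg_right (by positivity)).trans (hv x₀ (mem_of_mem_nhds hs))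
  exact hasFDerivAt_integral_of_dominated_of_fderiv_le hs (Eventually.of_forall hmeas) hint
    ((continuous_normSqFDerivFst hφ).comp (Continuous.prodMk_right x₀)).aestronglyMeasurable
    (hφb.mono fun v hv x hx => (norm_normSqFDerivFst_le _).trans (hv x hx)) hb
    (Eventually.of_forall fun _ x _ =>
      hasFDerivAt_norm_sq_comp_prodMk_left (hφ.differentiable one_ne_zero _))

theorem continuousAt_integral_normSqFDerivFst (hφ : ContDiff ℝ 1 φ) (hs : s ∈ 𝓝 x₀)
    (hb : Integrable b ν)
    (hφb : ∀ᵐ v ∂ν, ∀ x ∈ s, ‖φ (x, v)‖ ^ 2 + ‖fderiv ℝ φ (x, v)‖ ^ 2 ≤ b v) :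
    ContinuousAt (fun x => ∫ v, normSqFDerivFst φ (x, v) ∂ν) x₀ :=
  continuousAt_of_dominated
    (Eventually.of_forall fun x =>
      ((continuous_normSqFDerivFst hφ).comp (Continuous.prodMk_right x)).aestronglyMeasurable)
    (eventually_of_mem hs fun x hx =>
      hφb.mono fun _ hv => (norm_normSqFDerivFst_le _).trans (hv x hx)) hb
    (Eventually.of_forall fun v =>
      ((continuous_normSqFDerivFst hφ).comp (Continuous.prodMk_left v)).continuousAt)

end Differentiation

section Complex

variable {X Y : Type*} [NormedAddCommGroup X] [NormedSpace ℝ X] [NormedAddCommGroup Y]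
  [NormedSpace ℝ Y] {φ : X × Y → ℂ}

theorem normSqFDerivFst_apply {x : X} {v : Y} (hφ : DifferentiableAt ℝ φ (x, v)) (h : X) :
    normSqFDerivFst φ (x, v) h =
      2 * ((starRingEnd ℂ) (φ (x, v)) * fderiv ℝ (fun y => φ (y, v)) x h).re := by
  simp [normSqFDerivFst, (hasFDerivAt_comp_prodMk_left hφ).fderiv, Complex.inner, mul_comm]
  ring

variable [SecondCountableTopology Y] [MeasurableSpace Y] [OpensMeasurableSpace Y] {ν : Measure Y}

theorem integral_normSqFDerivFst_apply (hφ : ContDiff ℝ 1 φ) {x : X}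
    (hint : Integrable (fun v => ‖φ (x, v)‖ ^ 2 + ‖fderiv ℝ φ (x, v)‖ ^ 2) ν) (h : X) :
    (∫ v, normSqFDerivFst φ (x, v) ∂ν) h =
      2 * (∫ v, (starRingEnd ℂ) (φ (x, v)) * fderiv ℝ (fun y => φ (y, v)) x h ∂ν).re := by
  have hdiff := hφ.differentiable one_ne_zero
  have hcont : Continuous fun v =>
      (starRingEnd ℂ) (φ (x, v)) * (fderiv ℝ φ (x, v)).comp (ContinuousLinearMap.inl ℝ X Y) h :=
    (Complex.continuous_conj.comp (hφ.continuous.comp (Continuous.prodMk_right x))).mul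
      ((((hφ.continuous_fderiv one_ne_zero).comp (Continuous.prodMk_right x)).clm_comp
        continuous_const).clm_apply continuous_const)
  have hprod : Integrable (fun v =>
      (starRingEnd ℂ) (φ (x, v)) * fderiv ℝ (fun y => φ (y, v)) x h) ν := by
    simp_rw [(hasFDerivAt_comp_prodMk_left (hdiff _)).fderiv]
    refine (hint.mul_const ‖h‖).mono' hcont.aestronglyMeasurable (Eventually.of_forall fun v => ?_)
    set a := ‖φ (x, v)‖
    set L := fderiv ℝ φ (x, v)
    have hL : ‖L (h, 0)‖ ≤ ‖L‖ * ‖h‖ := by simpa using L.le_opNorm (h, 0)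
    calc ‖(starRingEnd ℂ) (φ (x, v)) * (L.comp (ContinuousLinearMap.inl ℝ X Y)) h‖
        = a * ‖L (h, 0)‖ := by simp [a]
      _ ≤ a * (‖L‖ * ‖h‖) := by gcongr
      _ ≤ (a ^ 2 + ‖L‖ ^ 2) * ‖h‖ := by
        nlinarith [mul_le_mul_of_nonneg_right (two_mul_le_add_sq a ‖L‖) (norm_nonneg h),
          mul_nonneg (mul_nonneg (norm_nonneg (φ (x, v))) (norm_nonneg L)) (norm_nonneg h)]
  have hderiv : Integrable (fun v => normSqFDerivFst φ (x, v)) ν :=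
    hint.mono'
      ((continuous_normSqFDerivFst hφ).comp (Continuous.prodMk_right x)).aestronglyMeasurable
      (Eventually.of_forall fun _ => norm_normSqFDerivFst_le _)
  simp_rw [ContinuousLinearMap.integral_apply hderiv, normSqFDerivFst_apply (hdiff _),
    integral_const_mul, ← RCLike.re_to_complex, integral_re hprod]

end Complex

theorem statement11_general (d : ℕ) (κ : ℝ)
    (α : E d × E d → ℂ) (hα : ContDiff ℝ 1 α)
    (h1 : Anorm κ 2 α < ⊤) (h2 : Anorm κ 2 (fderiv ℝ α) < ⊤) :
    (∀ x : E d, Integrable (fun v : E d => ‖α (x, v)‖ ^ 2)) ∧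
    MemLp (fun x : E d => ∫ v : E d, ‖α (x, v)‖ ^ 2) 1 volume ∧
    MemLp (fun x : E d => ∫ v : E d, ‖α (x, v)‖ ^ 2) ⊤ volume ∧
    ∃ ρ' : E d → (E d →L[ℝ] ℝ), Continuous ρ' ∧
      (∀ x : E d, HasFDerivAt (fun x' : E d => ∫ v : E d, ‖α (x', v)‖ ^ 2) (ρ' x) x) ∧
      (∀ (x : E d) (h : E d), ρ' x h =
        2 * (∫ v : E d, (starRingEnd ℂ) (α (x, v)) *
          fderiv ℝ (fun y : E d => α (y, v)) x h).re) ∧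
      Integrable (fun x : E d => ‖ρ' x‖) := by
  have hαc := hα.continuous
  have hDc := hα.continuous_fderiv one_ne_zero
  have hsq : Integrable fun z : E d × E d => ‖α z‖ ^ 2 + ‖fderiv ℝ α z‖ ^ 2 :=
    (integrable_norm_sq_of_Anorm_lt_top hαc.aestronglyMeasurable h1).add
      (integrable_norm_sq_of_Anorm_lt_top hDc.aestronglyMeasurable h2)
  have hslice (x : E d) : Integrable fun v => ‖α (x, v)‖ ^ 2 + ‖fderiv ℝ α (x, v)‖ ^ 2 :=
    (integrable_norm_sq_slice hαc h1 x).add (integrable_norm_sq_slice hDc h2 x)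
  have hdom (x₀ : E d) : ∃ b : E d → ℝ, Integrable b ∧ ∀ᵐ v, ∀ x ∈ closedBall x₀ 1,
      ‖α (x, v)‖ ^ 2 + ‖fderiv ℝ α (x, v)‖ ^ 2 ≤ b v := by
    obtain ⟨b₁, hb₁, hle₁⟩ := exists_integrable_bound_norm_sq_slice hαc h1 x₀ zero_le_one
    obtain ⟨b₂, hb₂, hle₂⟩ := exists_integrable_bound_norm_sq_slice hDc h2 x₀ zero_le_one
    refine ⟨b₁ + b₂, hb₁.add hb₂, ?_⟩
    filter_upwards [hle₁, hle₂] with v h₁ h₂ x hx using add_le_add (h₁ x hx) (h₂ x hx)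
  set ρ' := fun x : E d => ∫ v, normSqFDerivFst α (x, v)
  have hρ'c : Continuous ρ' := continuous_iff_continuousAt.2 fun x₀ => by
    obtain ⟨b, hb, hle⟩ := hdom x₀
    exact continuousAt_integral_normSqFDerivFst hα (closedBall_mem_nhds x₀ one_pos) hb hle
  refine ⟨integrable_norm_sq_slice hαc h1, memLp_one_iff_integrable.2
    (integrable_norm_sq_of_Anorm_lt_top hαc.aestronglyMeasurable h1).integral_prod_left,
    memLp_top_integral_norm_sq_slice hαc h1, ρ', hρ'c, fun x₀ => ?_,
    fun x h => integral_normSqFDerivFst_apply hα (hslice x) h, ?_⟩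
  · obtain ⟨b, hb, hle⟩ := hdom x₀
    exact hasFDerivAt_integral_norm_sq_comp_prodMk_left hα (closedBall_mem_nhds x₀ one_pos) hb hle
  · refine (hsq.integral_prod_left.mono' hρ'c.aestronglyMeasurable (Eventually.of_forall fun x =>
      norm_integral_le_of_norm_le (hslice x) (Eventually.of_forall fun v => ?_))).norm
    exact norm_normSqFDerivFst_le _

/-- Regularity of the spatial density `ρ(x) = ∫ |α(x,v)|² dv` for `α ∈ B^{1,κ,2}`:
`ρ` is well-defined everywhere, lies in `L¹ ∩ L^∞`, is continuously differentiable with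
`∇ρ(x) = 2 Re ∫ conj(α)(x,v) ∇ₓα(x,v) dv`, and `∇ρ ∈ L¹`; i.e. `ρ ∈ W^{1,1} ∩ C¹`. -/
theorem statement11 (d : ℕ) (hd : 1 ≤ d) (κ : ℝ) (hκ : 2 * (d : ℝ) ≤ κ)
    (α : E d × E d → ℂ) (hα : ContDiff ℝ 1 α)
    (h1 : Anorm κ 2 α < ⊤) (h2 : Anorm κ 2 (fderiv ℝ α) < ⊤) :
    (∀ x : E d, Integrable (fun v : E d => ‖α (x, v)‖ ^ 2)) ∧
    MemLp (fun x : E d => ∫ v : E d, ‖α (x, v)‖ ^ 2) 1 volume ∧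
    MemLp (fun x : E d => ∫ v : E d, ‖α (x, v)‖ ^ 2) ⊤ volume ∧
    ∃ ρ' : E d → (E d →L[ℝ] ℝ), Continuous ρ' ∧
      (∀ x : E d, HasFDerivAt (fun x' : E d => ∫ v : E d, ‖α (x', v)‖ ^ 2) (ρ' x) x) ∧
      (∀ (x : E d) (h : E d), ρ' x h =
        2 * (∫ v : E d, (starRingEnd ℂ) (α (x, v)) *
          fderiv ℝ (fun y : E d => α (y, v)) x h).re) ∧
      Integrable (fun x : E d => ‖ρ' x‖) :=
  statement11_general d κ α hα h1 h2
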